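/- arXiv:math/9204204 — 9 statements merged into one kernel-verified Lean document; each statement's English description precedes it below -/
import Mathlib

section
/- The reduction map m ↦ m mod 2^k is a surjective homomorphism from the Laver table (2^{k+1}, *_{k+1}) onto (2^k, *_k); that is, (m *_{k+1} n) mod 2^k = (m mod 2^k) *_k (n mod 2^k) for all m, n < 2^{k+1}. -/
open Fin.NatCast in
/-- The defining equations of the `k`-th Laver table, as an operation on `Fin (2^k)`. -/
def IsLaver (k : ℕ) (f : Fin (2^k) → Fin (2^k) → Fin (2^k)) : Prop :=
  (∀ m, f m 0 = 0) ∧ (∀ m, f m 1 = m + 1) ∧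
  (∀ m i, 1 < (i : ℕ) → f m i = f (f m (i - 1)) (f m 1))

/-!
With the column index read modulo the table size, the recursion `m ⋆ n = (m ⋆ (n - 1)) ⋆ (m + 1)`
holds in every column. Every entry `m ⋆ n` is either `0` or larger than `m`, so one may induct
downwards on the row and upwards on the column. In the induction step `x = m ⋆ (n - 1)` is `0`,
whose row is the identity in every table, or a later row, covered by the induction hypothesis; and
reduction modulo `2^k` commutes with `+ 1`, so it carries the recursion of the large table to that
of the small one.
-/

open Fin.NatCast in
structure IsLaverOp {S : ℕ} [NeZero S] (f : Fin S → Fin S → Fin S) : Prop where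
  map_zero : ∀ m, f m 0 = 0
  map_one : ∀ m, f m 1 = m + 1
  map_rec : ∀ m i, 1 < (i : ℕ) → f m i = f (f m (i - 1)) (f m 1)

theorem IsLaver.isLaverOp {k : ℕ} {f : Fin (2^k) → Fin (2^k) → Fin (2^k)} (hf : IsLaver k f) :
    IsLaverOp f :=
  ⟨hf.1, hf.2.1, hf.2.2⟩

namespace Fin

open Fin.NatCast

variable {S : ℕ} [NeZero S]

theorem exists_natCast_eq (n : Fin S) : ∃ k : ℕ, (k : Fin S) = n := ⟨n, cast_val_eq_self n⟩

theorem eq_zero_or_lt_add_one (m : Fin S) : m + 1 = 0 ∨ m < m + 1 := by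
  rcases Nat.lt_or_ge ((m : ℕ) + 1) S with h | h
  · right
    rw [lt_def, val_add_one_of_lt' h]
    lia
  · left
    ext
    rw [val_add, val_one', Nat.add_mod_mod, show (m : ℕ) + 1 = S by omega, Nat.mod_self, val_zero]

theorem natCast_val_natCast {M N : ℕ} [NeZero M] [NeZero N] (h : M ∣ N) (a : ℕ) :
    (((a : Fin N) : ℕ) : Fin M) = a := by
  ext
  simp only [val_natCast, Nat.mod_mod_of_dvd a h]

theorem natCast_val_add_one {M N : ℕ} [NeZero M] [NeZero N] (h : M ∣ N) (a : Fin N) :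
    (((a + 1 : Fin N) : ℕ) : Fin M) = ((a : ℕ) : Fin M) + 1 := by
  conv_lhs => rw [← cast_val_eq_self a, ← Nat.cast_succ, natCast_val_natCast h, Nat.cast_succ]

end Fin

namespace IsLaverOp

open Fin.NatCast

variable {S : ℕ} [NeZero S] {f : Fin S → Fin S → Fin S}

/-- The column index of `map_rec` is read modulo `S`, so taking `i = n + 2S` gives the recursion in
every column; at `n = 0` it says that `(m ⋆ (S - 1)) ⋆ (m + 1) = 0`. -/
theorem map_rec_cyclic (hf : IsLaverOp f) (m n : Fin S) : f m n = f (f m (n - 1)) (f m 1) := by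
  have h := hf.map_rec m (n + S + S) (by have := NeZero.pos S; omega)
  rwa [Nat.cast_add, Nat.cast_add, Fin.natCast_self, add_zero, add_zero, Fin.cast_val_eq_self] at h

theorem zero_left (hf : IsLaverOp f) (n : Fin S) : f 0 n = n := by
  obtain ⟨k, rfl⟩ := n.exists_natCast_eq
  induction k with
  | zero => exact hf.map_zero 0
  | succ k ih =>
    rw [hf.map_rec_cyclic, Nat.cast_succ, add_sub_cancel_right, ih, hf.map_one, zero_add, hf.map_one]

theorem eq_zero_or_lt (hf : IsLaverOp f) (m n : Fin S) : f m n = 0 ∨ m < f m n := by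
  induction m using WellFoundedGT.induction generalizing n with
  | _ m ih =>
  obtain ⟨k, rfl⟩ := n.exists_natCast_eq
  induction k with
  | zero => exact .inl (hf.map_zero m)
  | succ k ihk =>
    rw [hf.map_rec_cyclic, Nat.cast_succ, add_sub_cancel_right, hf.map_one]
    rcases ihk with h | h
    · rw [h, hf.zero_left]
      exact m.eq_zero_or_lt_add_one
    · exact (ih _ h (m + 1)).imp_right h.trans

theorem natCast_val_apply {M N : ℕ} [NeZero M] [NeZero N] (hMN : M ∣ N)
    {f : Fin N → Fin N → Fin N} {g : Fin M → Fin M → Fin M} (hf : IsLaverOp f) (hg : IsLaverOp g)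
    (m n : Fin N) : ((f m n : ℕ) : Fin M) = g (m : ℕ) (n : ℕ) := by
  induction m using WellFoundedGT.induction generalizing n with
  | _ m ih =>
  obtain ⟨k, rfl⟩ := n.exists_natCast_eq
  rw [Fin.natCast_val_natCast hMN]
  induction k with
  | zero => rw [Nat.cast_zero, Nat.cast_zero, hf.map_zero, hg.map_zero, Fin.val_zero, Nat.cast_zero]
  | succ k ihk =>
    rw [hf.map_rec_cyclic, hg.map_rec_cyclic, Nat.cast_succ, Nat.cast_succ, add_sub_cancel_right,
      add_sub_cancel_right, hf.map_one, hg.map_one, ← ihk, ← Fin.natCast_val_add_one hMN]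
    rcases hf.eq_zero_or_lt m k with h | h
    · rw [h, hf.zero_left, Fin.val_zero, Nat.cast_zero, hg.zero_left]
    · exact ih _ h (m + 1)

end IsLaverOp

theorem laver_proj_hom (k : ℕ)
    (f : Fin (2^(k+1)) → Fin (2^(k+1)) → Fin (2^(k+1)))
    (g : Fin (2^k) → Fin (2^k) → Fin (2^k))
    (hf : IsLaver (k+1) f) (hg : IsLaver k g) :
    ∀ m n : Fin (2^(k+1)),
      ((f m n : ℕ) % 2^k) =
        (g ⟨(m : ℕ) % 2^k, Nat.mod_lt _ (Nat.two_pow_pos k)⟩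
           ⟨(n : ℕ) % 2^k, Nat.mod_lt _ (Nat.two_pow_pos k)⟩ : ℕ) := fun m n =>
  congrArg Fin.val (hf.isLaverOp.natCast_val_apply (pow_dvd_pow 2 k.le_succ) hg.isLaverOp m n)
end

section
/- In any left distributive magma, for any element w, defining w^(0) = w and w^(i+1) = w^(i) · w^(i), one has w^(i) · w^(n) = w^(n+1) for all i ≤ n. -/
/-- Iterated squares: `w^(0) = w`, `w^(i+1) = w^(i) · w^(i)`. -/
def iterSq {M : Type*} (mul : M → M → M) (w : M) : ℕ → M
  | 0 => w
  | i + 1 => mul (iterSq mul w i) (iterSq mul w i)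

theorem iterSq_mul {M : Type*} (mul : M → M → M)
    (ld : ∀ a b c, mul a (mul b c) = mul (mul a b) (mul a c)) (w : M) :
    ∀ i n, i ≤ n → mul (iterSq mul w i) (iterSq mul w n) = iterSq mul w (n + 1) := by
  intro i n
  induction n with
  | zero =>
    intro h
    interval_cases i
    rfl
  | succ n ih =>
    intro h
    rcases Nat.lt_or_ge i (n+1) with h' | h'
    · have hi : i ≤ n := Nat.lt_succ_iff.mp h'
      have := ih hi
      show mul (iterSq mul w i) (mul (iterSq mul w n) (iterSq mul w n)) = _
      rw [ld, this]
      rfl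
    · have : i = n + 1 := le_antisymm h h'
      subst this
      rfl
end

section
/- In any algebra satisfying Σ, if j and k are elements and the iterates are defined by I_0 = k, I_1 = j, I_{n+2} = I_{n+1} · I_n, then I_{n+1} ∘ I_n = j ∘ k for all n. -/
/-- The iterates of a pair: `I 0 = k`, `I 1 = j`, `I (n+2) = I (n+1) · I n`. -/
def iterates {M : Type*} (mul : M → M → M) (j k : M) : ℕ → M
  | 0 => k
  | 1 => j
  | n + 2 => mul (iterates mul j k (n + 1)) (iterates mul j k n)

theorem iterates_comp {M : Type*} (mul comp : M → M → M)
    (h1 : ∀ a b c, comp a (comp b c) = comp (comp a b) c)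
    (h2 : ∀ a b c, mul (comp a b) c = mul a (mul b c))
    (h3 : ∀ a b c, mul a (comp b c) = comp (mul a b) (mul a c))
    (h4 : ∀ a b, comp a b = comp (mul a b) a)
    (j k : M) :
    ∀ n, comp (iterates mul j k (n + 1)) (iterates mul j k n) = comp j k := by
  intro n
  induction n with
  | zero => rfl
  | succ m ih =>
    rw [show iterates mul j k (m + 2) = mul (iterates mul j k (m + 1)) (iterates mul j k m) from rfl,
        ← h4]
    exact ih
end

section
/- Let B be a magma and for each i ≥ 1 define the map σ_i on B^ω by (σ_i(b))_i = b_i · b_{i+1}, (σ_i(b))_{i+1} = b_i, and (σ_i(b))_n = b_n for n ∉ {i, i+1}. Then the braid relation σ_i ∘ σ_{i+1} ∘ σ_i = σ_{i+1} ∘ σ_i ∘ σ_{i+1} holds (as maps on B^ω) if and only if B is left distributive, and σ_i ∘ σ_n = σ_n ∘ σ_i holds whenever |i - n| > 1. -/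
set_option maxHeartbeats 1000000


/-- The action of the braid generator `σ_i` on sequences over a magma:
`(σ_i b)_i = b_i · b_{i+1}`, `(σ_i b)_{i+1} = b_i`, other entries unchanged. -/
def braidAct {B : Type*} (mul : B → B → B) (i : ℕ) (b : ℕ → B) : ℕ → B :=
  fun n => if n = i then mul (b i) (b (i + 1)) else if n = i + 1 then b i else b n

theorem braid_relations_iff_leftDistrib {B : Type*} (mul : B → B → B) :
    ((∀ i : ℕ, 1 ≤ i →
        braidAct mul i ∘ braidAct mul (i + 1) ∘ braidAct mul i =
          braidAct mul (i + 1) ∘ braidAct mul i ∘ braidAct mul (i + 1)) ↔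
      (∀ a b c : B, mul a (mul b c) = mul (mul a b) (mul a c))) ∧
    (∀ i n : ℕ, 1 ≤ i → 1 ≤ n → (i + 1 < n ∨ n + 1 < i) →
      braidAct mul i ∘ braidAct mul n = braidAct mul n ∘ braidAct mul i) := by
  constructor
  · constructor
    · intro h a b c
      have := congrFun (congrFun (h 1 le_rfl) (fun n => if n = 1 then a else if n = 2 then b else c)) 1
      simpa [braidAct, Function.comp] using this.symm
    · intro hd i hi
      funext b n
      simp only [Function.comp, braidAct]
      split_ifs <;> first | rfl | omega | exact (hd _ _ _).symm
  · intro i n hi hn hcond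
    funext b m
    simp only [Function.comp, braidAct]
    split_ifs <;> first | rfl | omega
end

section
/- Dehornoy's bracket operation on the infinite braid group B_∞, defined by α[β] = α · s(β) · σ_1 · s(α)^{-1}, is left distributive: α[β[γ]] = (α[β])[α[γ]] for all α, β, γ in B_∞. -/
/-- The braid relations on generators indexed by `ℕ`, where index `i` stands for `σ_{i+1}`. -/
def braidRels : Set (FreeGroup ℕ) :=
  {r | (∃ i n : ℕ, (i + 1 < n ∨ n + 1 < i) ∧
          r = FreeGroup.of i * FreeGroup.of n * (FreeGroup.of n * FreeGroup.of i)⁻¹) ∨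
       (∃ i : ℕ, r = FreeGroup.of i * FreeGroup.of (i + 1) * FreeGroup.of i *
          (FreeGroup.of (i + 1) * FreeGroup.of i * FreeGroup.of (i + 1))⁻¹)}

/-- The infinite braid group `B_∞`. -/
abbrev BInf : Type := PresentedGroup braidRels

/-- The generator `σ_{i+1}` of `B_∞`. -/
def sigma (i : ℕ) : BInf := PresentedGroup.of i

lemma rel_one {r : FreeGroup ℕ} (h : r ∈ braidRels) : PresentedGroup.mk braidRels r = 1 :=
  (QuotientGroup.eq_one_iff r).2 (Subgroup.subset_normalClosure h)

lemma sigma_comm {i n : ℕ} (h : i + 1 < n ∨ n + 1 < i) : Commute (sigma i) (sigma n) := by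
  have h1 := rel_one (Or.inl ⟨i, n, h, rfl⟩)
  simp only [map_mul, map_inv] at h1
  have h2 : sigma i * sigma n * (sigma n * sigma i)⁻¹ = 1 := h1
  rw [mul_inv_eq_one] at h2
  exact h2

lemma sigma_braid (i : ℕ) :
    sigma i * sigma (i + 1) * sigma i = sigma (i + 1) * sigma i * sigma (i + 1) := by
  have h1 := rel_one (Or.inr ⟨i, rfl⟩)
  simp only [map_mul, map_inv] at h1
  have h2 : sigma i * sigma (i+1) * sigma i * (sigma (i+1) * sigma i * sigma (i+1))⁻¹ = 1 := h1
  rw [mul_inv_eq_one] at h2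
  exact h2

lemma comm_shift2 (s : BInf →* BInf) (hs : ∀ i, s (sigma i) = sigma (i + 1)) (x : BInf) :
    Commute (sigma 0) (s (s x)) := by
  have hx : x ∈ Subgroup.comap (s.comp s) (Subgroup.centralizer {sigma 0}) := by
    apply PresentedGroup.generated_by
    intro j
    simp only [Subgroup.mem_comap, MonoidHom.coe_comp, Function.comp_apply]
    rw [Subgroup.mem_centralizer_iff]
    rintro g rfl
    have h3 : s (s (PresentedGroup.of j : BInf)) = sigma (j + 1 + 1) := by
      rw [show (PresentedGroup.of j : BInf) = sigma j from rfl, hs, hs]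
    rw [h3]
    exact (sigma_comm (i := 0) (n := j + 1 + 1) (Or.inl (by omega))).eq
  rw [Subgroup.mem_comap] at hx
  exact Subgroup.mem_centralizer_iff.1 hx (sigma 0) rfl

lemma key_identity {M : Type*} [Group M] (p q r X B G a b : M)
    (hX : Commute a X) (hB : Commute a B) (hG : Commute a G)
    (hbr : a * b * a = b * a * b) :
    p * (r * G * b * B⁻¹) * a * q⁻¹ =
      (p * r * a * q⁻¹) * (q * G * b * X⁻¹) * a * (q * B * b * X⁻¹)⁻¹ := by
  have h1 : X⁻¹ * a * X = a := by
    rw [hX.symm.inv_left.eq]; group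
  symm
  calc (p * r * a * q⁻¹) * (q * G * b * X⁻¹) * a * (q * B * b * X⁻¹)⁻¹
      = p * r * (a * G) * b * (X⁻¹ * a * X) * b⁻¹ * B⁻¹ * q⁻¹ := by group
    _ = p * r * (G * a) * b * a * b⁻¹ * B⁻¹ * q⁻¹ := by rw [h1, hG.eq]
    _ = p * r * G * (a * b * a) * b⁻¹ * B⁻¹ * q⁻¹ := by group
    _ = p * r * G * (b * a * b) * b⁻¹ * B⁻¹ * q⁻¹ := by rw [hbr]
    _ = p * r * G * b * (a * B⁻¹) * q⁻¹ := by group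
    _ = p * r * G * b * (B⁻¹ * a) * q⁻¹ := by rw [hB.inv_right.eq]
    _ = p * (r * G * b * B⁻¹) * a * q⁻¹ := by group

/-- Dehornoy's bracket `α[β] = α · s(β) · σ_1 · s(α)⁻¹`, for a shift map `s`. -/
def bracket (s : BInf →* BInf) (α β : BInf) : BInf := α * s β * sigma 0 * (s α)⁻¹

theorem bracket_leftDistrib (s : BInf →* BInf) (hs : ∀ i, s (sigma i) = sigma (i + 1)) :
    ∀ α β γ : BInf, bracket s α (bracket s β γ) = bracket s (bracket s α β) (bracket s α γ) := by
  intro α β γ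
  have H := key_identity α (s α) (s β) (s (s α)) (s (s β)) (s (s γ)) (sigma 0) (sigma (0 + 1))
    (comm_shift2 s hs α) (comm_shift2 s hs β) (comm_shift2 s hs γ) (sigma_braid 0)
  simp only [bracket, map_mul, map_inv, hs]
  refine Eq.trans ?_ (Eq.trans H ?_) <;> group
end

section
/- In a left distributive magma M, define u <_L w to mean that w = (...((u · c_1) · c_2) ...) · c_n for some n ≥ 1 and c_1, ..., c_n in M. If <_L is irreflexive and total on M (for all a, b, exactly one of a <_L b, a = b, b <_L a holds), then left multiplication is injective: u·v = u·w implies v = w, and moreover u·v <_L u·w if and only if v <_L w. -/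
/-- `LtL mul u w` : `w = (...((u·c₁)·c₂)...)·cₙ` for some `n ≥ 1`. -/
def LtL {M : Type*} (mul : M → M → M) (u w : M) : Prop :=
  ∃ l : List M, l ≠ [] ∧ w = l.foldl mul u

private lemma ltL_trans {M : Type*} {mul : M → M → M} {a b c : M}
    (h1 : LtL mul a b) (h2 : LtL mul b c) : LtL mul a c := by
  obtain ⟨l1, h1ne, rfl⟩ := h1
  obtain ⟨l2, h2ne, rfl⟩ := h2
  exact ⟨l1 ++ l2, by simp [h1ne], by rw [List.foldl_append]⟩

private lemma foldl_map_mul {M : Type*} {mul : M → M → M}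
    (ld : ∀ a b c, mul a (mul b c) = mul (mul a b) (mul a c)) (u : M) :
    ∀ (l : List M) (v : M),
      mul u (l.foldl mul v) = (l.map (mul u)).foldl mul (mul u v) := by
  intro l
  induction l with
  | nil => intro v; rfl
  | cons x xs ih =>
    intro v
    rw [List.foldl_cons, List.map_cons, List.foldl_cons, ih, ld]

private lemma ltL_mono {M : Type*} {mul : M → M → M}
    (ld : ∀ a b c, mul a (mul b c) = mul (mul a b) (mul a c)) {u v w : M}
    (h : LtL mul v w) : LtL mul (mul u v) (mul u w) := by
  obtain ⟨l, hne, rfl⟩ := h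
  exact ⟨l.map (mul u), by simp [hne], foldl_map_mul ld u l v⟩

theorem leftMul_injective_of_linear {M : Type*} (mul : M → M → M)
    (ld : ∀ a b c, mul a (mul b c) = mul (mul a b) (mul a c))
    (irrefl : ∀ a : M, ¬ LtL mul a a)
    (total : ∀ a b : M, LtL mul a b ∨ a = b ∨ LtL mul b a) :
    ∀ u v w : M, (mul u v = mul u w → v = w) ∧
      (LtL mul (mul u v) (mul u w) ↔ LtL mul v w) := by
  intro u v w
  constructor
  · intro h
    rcases total v w with hlt | heq | hgt
    · exact absurd (h ▸ ltL_mono ld hlt) (irrefl _)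
    · exact heq
    · exact absurd (h ▸ ltL_mono ld hgt) (irrefl _)
  · constructor
    · intro h
      rcases total v w with hlt | heq | hgt
      · exact hlt
      · exact absurd (heq ▸ h) (irrefl _)
      · exact absurd (ltL_trans h (ltL_mono ld hgt)) (irrefl _)
    · exact ltL_mono ld
end

section
/- In the free left distributive magma A on one generator x, every element w distinct from x satisfies x <_L w, where u <_L w means w = (...((u·c_1)·c_2)...)·c_n for some n ≥ 1 and c_1,...,c_n in A. -/
/-- Equivalence of terms under the left distributive law. -/
inductive LDRel : FreeMagma Unit → FreeMagma Unit → Prop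
  | ld : ∀ a b c, LDRel (a * (b * c)) ((a * b) * (a * c))
  | refl : ∀ a, LDRel a a
  | symm : ∀ {a b}, LDRel a b → LDRel b a
  | trans : ∀ {a b c}, LDRel a b → LDRel b c → LDRel a c
  | mul_congr : ∀ {a b c d}, LDRel a b → LDRel c d → LDRel (a * c) (b * d)

/-- The free left distributive magma on one generator. -/
def FreeLD : Type := Quot LDRel

/-- Multiplication on the free left distributive magma. -/
def FreeLD.mul : FreeLD → FreeLD → FreeLD :=
  Quot.map₂ (· * ·) (fun a _ _ h => LDRel.mul_congr (LDRel.refl a) h)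
    (fun _ _ b h => LDRel.mul_congr h (LDRel.refl b))

/-- The generator `x` of the free left distributive magma. -/
def FreeLD.x : FreeLD := Quot.mk _ (FreeMagma.of ())

lemma mul_mk (a b : FreeMagma Unit) :
    FreeLD.mul (Quot.mk LDRel a) (Quot.mk LDRel b) = Quot.mk LDRel (a * b) := rfl

lemma aux (a b : FreeMagma Unit) :
    LtL FreeLD.mul FreeLD.x (Quot.mk LDRel (a * b)) := by
  induction a generalizing b with
  | ih1 u =>
    exact ⟨[Quot.mk LDRel b], by simp, rfl⟩
  | ih2 a₁ a₂ ih₁ ih₂ =>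
    obtain ⟨l, hl, hfold⟩ := ih₁ a₂
    have qb : FreeLD := Quot.mk LDRel b
    refine ⟨l ++ [show FreeLD from Quot.mk LDRel b], by simp, ?_⟩
    rw [List.foldl_append, ← hfold]
    rfl

theorem x_ltL_of_ne (w : FreeLD) (hw : w ≠ FreeLD.x) : LtL FreeLD.mul FreeLD.x w := by
  induction w using Quot.ind with
  | _ t =>
    cases t with
    | of u => exact absurd rfl hw
    | mul a b => exact aux a b
end

section
/- The term rewriting system on terms in one variable x over a binary operation, with the single rule replacing a subterm of the form a·(b·c) by (a·b)·(a·c), is confluent: if terms u and v are equivalent modulo the left distributive law, then there is a term r with u → r and v → r, where → denotes iterated application of the rewriting rule. -/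
/-!
Dehornoy's argument via the full development `∂` (`Rw.develop`): `∂ x = x` and
`∂ (t₁ * t₂) = mulLeaves (∂ t₁) (∂ t₂)`, where `mulLeaves t s` replaces every leaf `x` of `s`
by `t * x`. Then `t ↠ ∂ t`, every one-step rewrite of `t` rewrites further to `∂ t`, and `∂` is
monotone for `↠`. Hence every `s` with `t ↠ s` rewrites to some iterate `∂ⁿ t`, and any two such
iterates of `t` have a common reduct, so `↠` is confluent. An LD-equivalence is a zig-zag of
rewrites, which confluence straightens.
-/

open Relation

/-- One step of the rewriting system: replace a subterm `a·(b·c)` by `(a·b)·(a·c)`. -/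
inductive Rw : FreeMagma Unit → FreeMagma Unit → Prop
  | ld : ∀ a b c, Rw (a * (b * c)) ((a * b) * (a * c))
  | left : ∀ {a a'} (b), Rw a a' → Rw (a * b) (a' * b)
  | right : ∀ (a) {b b'}, Rw b b' → Rw (a * b) (a * b')

local infix:50 " ↠ " => ReflTransGen Rw

namespace Rw

def mulLeaves (t : FreeMagma Unit) : FreeMagma Unit → FreeMagma Unit
  | .of a => t * .of a
  | .mul s₁ s₂ => mulLeaves t s₁ * mulLeaves t s₂

def develop : FreeMagma Unit → FreeMagma Unit
  | .of a => .of a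
  | .mul t₁ t₂ => mulLeaves (develop t₁) (develop t₂)

theorem reflTransGen_mul_left {a a' : FreeMagma Unit} (b : FreeMagma Unit) (h : a ↠ a') :
    a * b ↠ a' * b :=
  h.lift (· * b) fun _ _ ↦ Rw.left b

theorem reflTransGen_mul_right (a : FreeMagma Unit) {b b' : FreeMagma Unit} (h : b ↠ b') :
    a * b ↠ a * b' :=
  h.lift (a * ·) fun _ _ ↦ Rw.right a

theorem reflTransGen_mul {a a' b b' : FreeMagma Unit} (ha : a ↠ a') (hb : b ↠ b') :
    a * b ↠ a' * b' :=
  (reflTransGen_mul_left b ha).trans (reflTransGen_mul_right a' hb)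

theorem mul_to_mulLeaves (t : FreeMagma Unit) : ∀ s, t * s ↠ mulLeaves t s
  | .of _ => .refl
  | .mul s₁ s₂ =>
    (ReflTransGen.single (Rw.ld t s₁ s₂)).trans
      (reflTransGen_mul (mul_to_mulLeaves t s₁) (mul_to_mulLeaves t s₂))

theorem mulLeaves_mono_left {t t' : FreeMagma Unit} (h : t ↠ t') :
    ∀ s, mulLeaves t s ↠ mulLeaves t' s
  | .of _ => reflTransGen_mul_left _ h
  | .mul s₁ s₂ => reflTransGen_mul (mulLeaves_mono_left h s₁) (mulLeaves_mono_left h s₂)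

theorem mulLeaves_mono_right (t : FreeMagma Unit) {s s' : FreeMagma Unit} (h : s ↠ s') :
    mulLeaves t s ↠ mulLeaves t s' := by
  refine ReflTransGen.lift' (mulLeaves t) (fun a b hstep ↦ ?_) _ _ h
  show mulLeaves t a ↠ mulLeaves t b
  induction hstep with
  | ld a b c => exact .single (Rw.ld (mulLeaves t a) (mulLeaves t b) (mulLeaves t c))
  | left b _ ih => exact reflTransGen_mul_left _ ih
  | right a _ ih => exact reflTransGen_mul_right _ ih

theorem mulLeaves_mulLeaves_to (t u : FreeMagma Unit) :
    ∀ v, mulLeaves t (mulLeaves u v) ↠ mulLeaves (mulLeaves t u) (mulLeaves t v)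
  | .of a =>
    (ReflTransGen.single (Rw.ld (mulLeaves t u) t (.of a))).trans
      (reflTransGen_mul_left _ (mul_to_mulLeaves (mulLeaves t u) t))
  | .mul v₁ v₂ => reflTransGen_mul (mulLeaves_mulLeaves_to t u v₁) (mulLeaves_mulLeaves_to t u v₂)

theorem mul_develop_to_develop_mul (t₁ t₂ : FreeMagma Unit) :
    develop t₁ * develop t₂ ↠ develop (t₁ * t₂) :=
  mul_to_mulLeaves (develop t₁) (develop t₂)

theorem to_develop : ∀ t, t ↠ develop t
  | .of _ => .refl
  | .mul t₁ t₂ =>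
    (reflTransGen_mul (to_develop t₁) (to_develop t₂)).trans (mul_develop_to_develop_mul t₁ t₂)

theorem to_develop_of_rw {t s : FreeMagma Unit} (h : Rw t s) : s ↠ develop t := by
  induction h with
  | ld a b c =>
    calc (a * b) * (a * c) ↠ develop (a * b) * develop (a * c) :=
          reflTransGen_mul (to_develop _) (to_develop _)
      -- the left side is `mulLeaves (develop a) (develop b * develop c)`
      _ ↠ develop (a * (b * c)) :=
          mulLeaves_mono_right (develop a) (mul_develop_to_develop_mul b c)
  | left b _ ih =>
    exact (reflTransGen_mul ih (to_develop b)).trans (mul_develop_to_develop_mul _ _)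
  | right a _ ih =>
    exact (reflTransGen_mul (to_develop a) ih).trans (mul_develop_to_develop_mul _ _)

theorem develop_mono {t s : FreeMagma Unit} (h : t ↠ s) : develop t ↠ develop s := by
  refine ReflTransGen.lift' develop (fun a b hstep ↦ ?_) _ _ h
  show develop a ↠ develop b
  induction hstep with
  | ld a b c => exact mulLeaves_mulLeaves_to (develop a) (develop b) (develop c)
  | left b _ ih => exact mulLeaves_mono_left ih _
  | right a _ ih => exact mulLeaves_mono_right _ ih

theorem to_develop_iterate (t : FreeMagma Unit) (n : ℕ) : t ↠ develop^[n] t := by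
  induction n with
  | zero => exact .refl
  | succ n ih => exact ih.trans (Function.iterate_succ_apply' develop n t ▸ to_develop _)

theorem exists_to_develop_iterate {t s : FreeMagma Unit} (h : t ↠ s) :
    ∃ n, s ↠ develop^[n] t := by
  induction h with
  | refl => exact ⟨0, .refl⟩
  | tail _ hstep ih =>
    obtain ⟨n, hn⟩ := ih
    refine ⟨n + 1, (to_develop_of_rw hstep).trans ?_⟩
    rw [Function.iterate_succ_apply']
    exact develop_mono hn

theorem confluent {t s₁ s₂ : FreeMagma Unit} (h₁ : t ↠ s₁) (h₂ : t ↠ s₂) :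
    Join (ReflTransGen Rw) s₁ s₂ := by
  obtain ⟨n, hn⟩ := exists_to_develop_iterate h₁
  obtain ⟨m, hm⟩ := exists_to_develop_iterate h₂
  refine ⟨develop^[m + n] t, hn.trans ?_, hm.trans ?_⟩
  · exact Function.iterate_add_apply develop m n t ▸ to_develop_iterate _ m
  · exact add_comm n m ▸ Function.iterate_add_apply develop n m t ▸ to_develop_iterate _ n

end Rw

theorem ld_rewriting_confluent (u v : FreeMagma Unit) (h : LDRel u v) :
    ∃ r : FreeMagma Unit,
      Relation.ReflTransGen Rw u r ∧ Relation.ReflTransGen Rw v r := by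
  have hjoin : Equivalence (Join (ReflTransGen Rw)) :=
    equivalence_join fun _ _ _ ↦ Rw.confluent
  induction h with
  | ld a b c => exact ⟨_, .single (Rw.ld a b c), .refl⟩
  | refl a => exact hjoin.refl a
  | symm _ ih => exact hjoin.symm ih
  | trans _ _ ih₁ ih₂ => exact hjoin.trans ih₁ ih₂
  | mul_congr _ _ ih₁ ih₂ =>
    obtain ⟨r₁, ha, hb⟩ := ih₁
    obtain ⟨r₂, hc, hd⟩ := ih₂
    exact ⟨r₁ * r₂, Rw.reflTransGen_mul ha hc, Rw.reflTransGen_mul hb hd⟩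
end

section
/- In any algebra satisfying Σ generated by a single element x under · and ∘, every element is equal to a composition w_1 ∘ w_2 ∘ ... ∘ w_c where each w_i lies in the sub-magma generated by x under · alone. -/
/-- Membership in the closure of `{x}` under `mul` alone. -/
inductive GenA {M : Type*} (mul : M → M → M) (x : M) : M → Prop
  | base : GenA mul x x
  | mul : ∀ {a b}, GenA mul x a → GenA mul x b → GenA mul x (mul a b)

/-- Membership in the closure of `{x}` under `mul` and `comp`. -/
inductive GenP {M : Type*} (mul comp : M → M → M) (x : M) : M → Prop
  | base : GenP mul comp x x
  | mul : ∀ {a b}, GenP mul comp x a → GenP mul comp x b → GenP mul comp x (mul a b)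
  | comp : ∀ {a b}, GenP mul comp x a → GenP mul comp x b → GenP mul comp x (comp a b)

theorem sigma_decomposition {M : Type*} (mul comp : M → M → M)
    (h1 : ∀ a b c, comp a (comp b c) = comp (comp a b) c)
    (h2 : ∀ a b c, mul (comp a b) c = mul a (mul b c))
    (h3 : ∀ a b c, mul a (comp b c) = comp (mul a b) (mul a c))
    (h4 : ∀ a b, comp a b = comp (mul a b) a)
    (x : M) (hgen : ∀ a : M, GenP mul comp x a) :
    ∀ a : M, ∃ (w : M) (l : List M), GenA mul x w ∧ (∀ u ∈ l, GenA mul x u) ∧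
      a = l.foldl comp w := by
  have fold_assoc : ∀ (m : List M) (a v : M),
      List.foldl comp (comp a v) m = comp a (List.foldl comp v m) := by
    intro m
    induction m with
    | nil => intro a v; rfl
    | cons q m' ih => intro a v; simp only [List.foldl_cons]; rw [← h1, ih]
  have mul_fold : ∀ (m : List M) (u v : M),
      mul u (List.foldl comp v m) = List.foldl comp (mul u v) (m.map (mul u)) := by
    intro m
    induction m with
    | nil => intro u v; rfl
    | cons q m' ih => intro u v; simp only [List.foldl_cons, List.map_cons]; rw [ih, h3]
  have key : ∀ (l : List M) (w : M), GenA mul x w → (∀ u ∈ l, GenA mul x u) →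
      ∀ (v : M) (m : List M), GenA mul x v → (∀ u ∈ m, GenA mul x u) →
      ∃ (w' : M) (l' : List M), GenA mul x w' ∧ (∀ u ∈ l', GenA mul x u) ∧
        mul (List.foldl comp w l) (List.foldl comp v m) = List.foldl comp w' l' := by
    intro l
    induction l using List.reverseRecOn with
    | nil =>
      intro w hw _ v m hv hm
      refine ⟨mul w v, m.map (mul w), hw.mul hv, ?_, mul_fold m w v⟩
      intro u hu
      obtain ⟨u', hu', rfl⟩ := List.mem_map.1 hu
      exact hw.mul (hm u' hu')
    | append_singleton l' t ih =>
      intro w hw hl v m hv hm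
      have ht : GenA mul x t := hl t (by simp)
      have hl' : ∀ u ∈ l', GenA mul x u := fun u hu => hl u (by simp [hu])
      have hm' : ∀ u ∈ m.map (mul t), GenA mul x u := by
        intro u hu
        obtain ⟨u', hu', rfl⟩ := List.mem_map.1 hu
        exact ht.mul (hm u' hu')
      obtain ⟨w', ll, hw', hll, heq⟩ := ih w hw hl' (mul t v) (m.map (mul t))
        (ht.mul hv) hm'
      refine ⟨w', ll, hw', hll, ?_⟩
      rw [List.foldl_append, List.foldl_cons, List.foldl_nil, h2, mul_fold, heq]
  intro a
  have ha := hgen a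
  induction ha with
  | base => exact ⟨x, [], GenA.base, by simp, rfl⟩
  | mul ha hb iha ihb =>
    obtain ⟨w, l, hw, hl, rfl⟩ := iha
    obtain ⟨v, m, hv, hm, rfl⟩ := ihb
    obtain ⟨w', l', hw', hl', heq⟩ := key l w hw hl v m hv hm
    exact ⟨w', l', hw', hl', heq⟩
  | comp ha hb iha ihb =>
    obtain ⟨w, l, hw, hl, rfl⟩ := iha
    obtain ⟨v, m, hv, hm, rfl⟩ := ihb
    refine ⟨w, l ++ v :: m, hw, ?_, ?_⟩
    · intro u hu
      rcases List.mem_append.1 hu with h | h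
      · exact hl u h
      · rcases List.mem_cons.1 h with rfl | h
        · exact hv
        · exact hm u h
    · rw [List.foldl_append, List.foldl_cons, fold_assoc]
end
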